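/- Let S be a non-special numerical semigroup and T = (S ∪ {h}) \ {m(S)} with h = max(SG(S) \ {F(S)}). If there exists a gap x of S with F(S) - m(S) + 1 ≤ x < F(S), then e(T) ≥ e(S), where e denotes the embedding dimension (number of minimal generators). -/

import Mathlib

open Set

/-- A numerical semigroup: a submonoid of ℕ with finite complement. -/
def IsNumSgp (S : Set ℕ) : Prop :=
  0 ∈ S ∧ (∀ a ∈ S, ∀ b ∈ S, a + b ∈ S) ∧ Sᶜ.Finite

/-- The Frobenius number: the largest gap. -/
noncomputable def frob (S : Set ℕ) : ℕ := sSup Sᶜ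

/-- The multiplicity: the least nonzero element. -/
noncomputable def mult (S : Set ℕ) : ℕ := sInf (S \ {0})

/-- The genus: the number of gaps. -/
noncomputable def genus (S : Set ℕ) : ℕ := Sᶜ.ncard

/-- The number of left elements: elements of S smaller than the Frobenius number. -/
noncomputable def leftEls (S : Set ℕ) : ℕ := {s ∈ S | s < frob S}.ncard

/-- x is a minimal generator of S: nonzero and not a sum of two nonzero elements of S. -/
def IsMinGen (S : Set ℕ) (x : ℕ) : Prop :=
  x ∈ S ∧ x ≠ 0 ∧ ¬ ∃ a ∈ S, ∃ b ∈ S, a ≠ 0 ∧ b ≠ 0 ∧ x = a + b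

/-- The embedding dimension: number of minimal generators. -/
noncomputable def edim (S : Set ℕ) : ℕ := {x | IsMinGen S x}.ncard

/-- The set of special gaps of S. -/
def SG (S : Set ℕ) : Set ℕ :=
  {h | h ∉ S ∧ 2 * h ∈ S ∧ ∀ s ∈ S, s ≠ 0 → h + s ∈ S}

/-- Irreducible numerical semigroup (characterization via special gaps). -/
def IsIrred (S : Set ℕ) : Prop := SG S = {frob S}

/-- Ordinary numerical semigroup. -/
def IsOrdinary (S : Set ℕ) : Prop := ∃ c, S = {0} ∪ {m | c ≤ m}

/-- Special numerical semigroup: every special gap other than F(S) is below the multiplicity. -/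
def IsSpecial (S : Set ℕ) : Prop := ∀ h ∈ SG S, h ≠ frob S → h < mult S

/-- The transform 𝒜, defined on non-special numerical semigroups. -/
noncomputable def Atrans (S : Set ℕ) : Set ℕ :=
  (S ∪ {sSup (SG S \ {frob S})}) \ {mult S}

/-- The sub-Frobenius number: the largest gap different from F(S). -/
noncomputable def subFrob (S : Set ℕ) : ℕ := sSup (Sᶜ \ {frob S})

/-- Almost-ordinary: exactly one gap greater than the multiplicity. -/
noncomputable def IsAlmostOrdinary (S : Set ℕ) : Prop := {h | h ∉ S ∧ mult S < h}.ncard = 1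

/-- The transform ℬ of Bras-Amorós. -/
noncomputable def Btrans (S : Set ℕ) : Set ℕ := (S \ {mult S}) ∪ {subFrob S}

/-!
Write `m = mult S`, `F = frob S` and `g = subFrob S`. A gap `x` with `F < x + m` forces
`F < g + m`, and a non-special `S` has a special gap above `m`, so `m < g`; together these make
`g` special, hence `g` is the special gap adjoined by `Atrans`. In `T = (S ∪ {g}) \ {m}` every
nonzero element exceeds `m`, so `g` and `2 * m` are minimal generators of `T`. Every other minimal
generator `x ≠ m` of `S` stays minimal in `T`: a decomposition `x = g + c` with `m < c` would
make `x - m > g` a gap (by minimality of `x`), hence `x - m = F`. So the minimal generators of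
`S` other than `m` and `F + m` embed into those of `T` other than `g` and `2 * m`.
-/

theorem Set.ncard_le_ncard_of_sdiff_subset_sdiff {α : Type*} {A B P Q : Set α}
    (hB : B.Finite) (hP : P.Finite) (hAB : A \ P ⊆ B \ Q) (hQB : Q ⊆ B)
    (hPQ : P.ncard ≤ Q.ncard) : A.ncard ≤ B.ncard :=
  calc A.ncard ≤ (A \ P).ncard + P.ncard := ncard_le_ncard_sdiff_add_ncard A P hP
    _ ≤ (B \ Q).ncard + Q.ncard := add_le_add (ncard_le_ncard hAB hB.sdiff) hPQ
    _ = B.ncard := ncard_sdiff_add_ncard_of_subset hQB hB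

theorem finite_setOf_isMinGen_of_forall_lt_mem {T : Set ℕ} {k : ℕ} (hT : ∀ n, k < n → n ∈ T) :
    {x | IsMinGen T x}.Finite := by
  refine (finite_Iic (2 * k + 1)).subset fun x (hx : IsMinGen T x) => ?_
  rw [mem_Iic]
  by_contra! hxk
  exact hx.2.2 ⟨k + 1, hT _ (by omega), x - (k + 1), hT _ (by omega), by omega, by omega,
    by omega⟩

theorem mult_le {S : Set ℕ} {s : ℕ} (hs : s ∈ S) (hs0 : s ≠ 0) : mult S ≤ s :=
  Nat.sInf_le ⟨hs, hs0⟩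

namespace IsNumSgp

variable {S : Set ℕ} (hS : IsNumSgp S)
include hS

theorem le_frob {n : ℕ} (hn : n ∉ S) : n ≤ frob S :=
  le_csSup hS.2.2.bddAbove hn

theorem mem_of_frob_lt {n : ℕ} (hn : frob S < n) : n ∈ S := by
  by_contra h
  exact (hS.le_frob h).not_gt hn

theorem mult_mem_sdiff : mult S ∈ S \ {0} :=
  Nat.sInf_mem ⟨frob S + 1, hS.mem_of_frob_lt (Nat.lt_succ_self _), by simp⟩

theorem mult_mem : mult S ∈ S := hS.mult_mem_sdiff.1

theorem mult_ne_zero : mult S ≠ 0 := hS.mult_mem_sdiff.2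

theorem two_mul_mult_mem : 2 * mult S ∈ S :=
  two_mul (mult S) ▸ hS.2.1 _ hS.mult_mem _ hS.mult_mem

theorem two_mul_mult_not_isMinGen : ¬ IsMinGen S (2 * mult S) := fun h =>
  h.2.2 ⟨mult S, hS.mult_mem, mult S, hS.mult_mem, hS.mult_ne_zero, hS.mult_ne_zero, two_mul _⟩

theorem subFrob_mem (hne : (Sᶜ \ {frob S}).Nonempty) : subFrob S ∈ Sᶜ \ {frob S} :=
  hne.csSup_mem (hS.2.2.subset sdiff_subset)

theorem le_subFrob {c : ℕ} (hc : c ∉ S) (hcF : c ≠ frob S) : c ≤ subFrob S :=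
  le_csSup (hS.2.2.subset sdiff_subset).bddAbove ⟨hc, hcF⟩

theorem mem_SG {g : ℕ} (hg : g ∉ S) (h2g : frob S < 2 * g) (hgm : frob S < g + mult S) :
    g ∈ SG S :=
  ⟨hg, hS.mem_of_frob_lt h2g, fun s hs hs0 => hS.mem_of_frob_lt <| by
    have := mult_le hs hs0; omega⟩

section Exchange

variable {g : ℕ} (hgS : g ∉ S) (hmg : mult S < g) (hg_max : ∀ c ∉ S, c ≠ frob S → c ≤ g)

omit hS in
include hmg in
theorem mult_lt_of_mem_exchange {y : ℕ} (hy : y ∈ (S ∪ {g}) \ {mult S}) (hy0 : y ≠ 0) :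
    mult S < y := by
  obtain ⟨hyS | rfl, hym⟩ := hy
  · exact lt_of_le_of_ne (mult_le hyS hy0) (Ne.symm hym)
  · exact hmg

include hmg hg_max in
theorem eq_frob_add_mult_of_isMinGen_add {c : ℕ} (hc : mult S < c) (hmin : IsMinGen S (g + c)) :
    g + c = frob S + mult S := by
  have hsub : g + c - mult S ∉ S := fun hmem =>
    hmin.2.2 ⟨mult S, hS.mult_mem, _, hmem, hS.mult_ne_zero, by omega, by omega⟩
  by_contra hne
  have := hg_max _ hsub (by omega)
  omega

include hgS hmg in
theorem isMinGen_exchange_self : IsMinGen ((S ∪ {g}) \ {mult S}) g := by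
  refine ⟨⟨Or.inr rfl, hmg.ne'⟩, by omega, ?_⟩
  rintro ⟨a, haT, b, hbT, ha0, hb0, hab⟩
  have := mult_lt_of_mem_exchange hmg haT ha0
  have := mult_lt_of_mem_exchange hmg hbT hb0
  obtain ⟨haS | hag, -⟩ := haT
  · obtain ⟨hbS | hbg, -⟩ := hbT
    · exact hgS (hab ▸ hS.2.1 a haS b hbS)
    · simp only [mem_singleton_iff] at hbg; omega
  · simp only [mem_singleton_iff] at hag; omega

include hmg in
theorem isMinGen_exchange_two_mul_mult : IsMinGen ((S ∪ {g}) \ {mult S}) (2 * mult S) := by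
  have hm0 := hS.mult_ne_zero
  refine ⟨⟨Or.inl hS.two_mul_mult_mem, (by omega : 2 * mult S ≠ mult S)⟩, by omega, ?_⟩
  rintro ⟨a, haT, b, hbT, ha0, hb0, hab⟩
  have := mult_lt_of_mem_exchange hmg haT ha0
  have := mult_lt_of_mem_exchange hmg hbT hb0
  omega

include hmg hg_max in
theorem isMinGen_exchange {x : ℕ} (hx : IsMinGen S x) (hxm : x ≠ mult S)
    (hxF : x ≠ frob S + mult S) : IsMinGen ((S ∪ {g}) \ {mult S}) x := by
  refine ⟨⟨Or.inl hx.1, hxm⟩, hx.2.1, ?_⟩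
  rintro ⟨a, haT, b, hbT, ha0, hb0, rfl⟩
  have hma := mult_lt_of_mem_exchange hmg haT ha0
  have hmb := mult_lt_of_mem_exchange hmg hbT hb0
  obtain ⟨haS | rfl, -⟩ := haT
  · obtain ⟨hbS | rfl, -⟩ := hbT
    · exact hx.2.2 ⟨a, haS, b, hbS, ha0, hb0, rfl⟩
    · rw [add_comm] at hx hxF
      exact hxF (hS.eq_frob_add_mult_of_isMinGen_add hmg hg_max hma hx)
  · exact hxF (hS.eq_frob_add_mult_of_isMinGen_add hmg hg_max hmb hx)

include hgS hmg hg_max in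
theorem edim_le_edim_exchange : edim S ≤ edim ((S ∪ {g}) \ {mult S}) := by
  have hmF : mult S < frob S := hmg.trans_le (hS.le_frob hgS)
  have hfin : {x | IsMinGen ((S ∪ {g}) \ {mult S}) x}.Finite :=
    finite_setOf_isMinGen_of_forall_lt_mem (k := frob S) fun n hn =>
      ⟨Or.inl (hS.mem_of_frob_lt hn), (by omega : n ≠ mult S)⟩
  refine ncard_le_ncard_of_sdiff_subset_sdiff (P := {mult S, frob S + mult S})
    (Q := {g, 2 * mult S}) hfin (toFinite _) ?_ ?_ ?_
  · rintro x ⟨hx, hxP⟩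
    simp only [mem_insert_iff, mem_singleton_iff, not_or] at hxP
    refine ⟨hS.isMinGen_exchange hmg hg_max hx hxP.1 hxP.2, ?_⟩
    rintro (rfl | rfl)
    · exact hgS hx.1
    · exact hS.two_mul_mult_not_isMinGen hx
  · rintro x (hx | hx) <;> rw [hx]
    · exact hS.isMinGen_exchange_self hgS hmg
    · exact hS.isMinGen_exchange_two_mul_mult hmg
  · have hg2m : g ≠ 2 * mult S := fun h => hgS (h ▸ hS.two_mul_mult_mem)
    rw [ncard_pair hg2m]
    exact (ncard_insert_le _ _).trans (by simp)

end Exchange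

end IsNumSgp

theorem Atrans_edim_increases (S : Set ℕ) (hS : IsNumSgp S) (hsp : ¬ IsSpecial S)
    (hx : ∃ x : ℕ, x ∉ S ∧ frob S - mult S + 1 ≤ x ∧ x < frob S) :
    edim (Atrans S) ≥ edim S := by
  obtain ⟨h, ⟨hhS, -, -⟩, hhF, hmh⟩ : ∃ h ∈ SG S, h ≠ frob S ∧ mult S ≤ h := by
    simpa [IsSpecial] using hsp
  obtain ⟨x, hxS, hFx, hxF⟩ := hx
  have hg := hS.subFrob_mem ⟨h, hhS, hhF⟩
  have hmg : mult S < subFrob S :=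
    (lt_of_le_of_ne hmh fun he => hhS (he ▸ hS.mult_mem)).trans_le (hS.le_subFrob hhS hhF)
  have hFg : frob S < subFrob S + mult S := by
    have := hS.le_subFrob hxS hxF.ne; omega
  have hgreatest : IsGreatest (SG S \ {frob S}) (subFrob S) :=
    ⟨⟨hS.mem_SG hg.1 (by omega) hFg, hg.2⟩, fun c hc => hS.le_subFrob hc.1.1 hc.2⟩
  rw [Atrans, hgreatest.csSup_eq]
  exact hS.edim_le_edim_exchange hg.1 hmg fun _ => hS.le_subFrob
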